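/- arXiv:2406.03597 — 3 statements merged into one kernel-verified Lean document; each statement's English description precedes it below -/
import Mathlib

section
/- Let V be a finite set and K a simplicial complex on V with K ≠ 2^V. Then the minimal non-faces of the Bier sphere Bier(K) are exactly the following sets: (i) the minimal non-faces of K (viewed as subsets of the first copy V); (ii) the minimal non-faces of the Alexander dual K̂ (viewed as subsets of the second copy V'); and (iii) the two-element sets {v, v'} for those v ∈ V such that {v} is a face of K and {v'} is a face of K̂. -/
/-- A simplicial complex on a ground type `V`: a collection of finite subsets of `V`
containing the empty set and closed under taking subsets. -/
def IsSimplicialComplex {V : Type*} (K : Set (Finset V)) : Prop :=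
  ∅ ∈ K ∧ ∀ s ∈ K, ∀ t ⊆ s, t ∈ K

/-- A minimal non-face of `K`: not a face, but all proper subsets are faces. -/
def IsMinNonFace {V : Type*} (K : Set (Finset V)) (s : Finset V) : Prop :=
  s ∉ K ∧ ∀ t ⊂ s, t ∈ K

/-- The Alexander dual of `K`, with the primed copy `V'` identified with `V`:
faces are those `τ` with `V \ τ` not a face of `K`. -/
def alexDual {V : Type*} [Fintype V] [DecidableEq V] (K : Set (Finset V)) :
    Set (Finset V) :=
  {τ | Finset.univ \ τ ∉ K}

/-- The Bier sphere of `K`: the deleted join of `K` and its Alexander dual, a complex on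
`V ⊕ V` (left summand = `V`, right summand = the primed copy `V'`). -/
def bier {V : Type*} [Fintype V] [DecidableEq V] (K : Set (Finset V)) :
    Set (Finset (V ⊕ V)) :=
  {ρ | ∃ σ τ : Finset V, σ ∈ K ∧ τ ∈ alexDual K ∧ Disjoint σ τ ∧
    ρ = σ.image Sum.inl ∪ τ.image Sum.inr}


/-!
The Bier sphere is the deleted join of `K` and `K̂`, and the classification holds for the
deleted join of any two simplicial complexes `K`, `L` on `V`. A minimal non-face `ρ = σ ⊔ τ'`
either fails disjointness, and then it already contains a non-face `{v, v'}` with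
`v ∈ σ ∩ τ`, or it has `σ ∉ K` (resp. `τ ∉ L`), and then it already contains the non-face `σ`
(resp. `τ'`). Minimality forces `ρ` to equal that smaller non-face.
-/

open Finset

section

variable {V : Type*}

lemma IsMinNonFace.eq_of_subset_of_notMem {K : Set (Finset V)} {s t : Finset V}
    (hs : IsMinNonFace K s) (hts : t ⊆ s) (ht : t ∉ K) : t = s :=
  by_contra fun hne => ht (hs.2 t (ssubset_of_subset_of_ne hts hne))

namespace IsSimplicialComplex

variable [Fintype V] {K : Set (Finset V)}

lemma univ_notMem (hK : IsSimplicialComplex K) (hne : K ≠ Set.univ) : univ ∉ K :=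
  fun huniv => hne <| Set.eq_univ_of_forall fun s => hK.2 univ huniv s (subset_univ s)

protected lemma alexDual [DecidableEq V] (hK : IsSimplicialComplex K) (huniv : univ ∉ K) :
    IsSimplicialComplex (alexDual K) :=
  ⟨by simpa [alexDual] using huniv,
    fun _ hs _ hts hcompl => hs (hK.2 _ hcompl _ (sdiff_subset_sdiff subset_rfl hts))⟩

end IsSimplicialComplex

def deletedJoin (K L : Set (Finset V)) : Set (Finset (V ⊕ V)) :=
  {ρ | ρ.toLeft ∈ K ∧ ρ.toRight ∈ L ∧ Disjoint ρ.toLeft ρ.toRight}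

section DeletedJoin

variable {K L : Set (Finset V)}

lemma disjSum_mem_deletedJoin {s t : Finset V} :
    s.disjSum t ∈ deletedJoin K L ↔ s ∈ K ∧ t ∈ L ∧ Disjoint s t := by
  simp [deletedJoin]

lemma isMinNonFace_deletedJoin_disjSum_empty (hL : ∅ ∈ L) {s : Finset V} :
    IsMinNonFace (deletedJoin K L) (s.disjSum ∅) ↔ IsMinNonFace K s := by
  simp only [IsMinNonFace, disjSum_mem_deletedJoin, disjoint_empty_right, and_true, hL]
  refine ⟨fun ⟨hs, hmin⟩ => ⟨hs, fun t hts => ?_⟩, fun ⟨hs, hmin⟩ => ⟨hs, fun ρ hρ => ?_⟩⟩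
  · exact (disjSum_mem_deletedJoin.1 <|
      hmin _ (disjSum_ssubset_disjSum_of_ssubset_of_subset hts subset_rfl)).1
  · obtain ⟨hl, hr⟩ := subset_disjSum.1 hρ.1
    rw [subset_empty] at hr
    have hne : ρ.toLeft ≠ s := fun h => hρ.2 (by rw [← toLeft_disjSum_toRight (u := ρ), h, hr])
    exact ⟨hmin _ (ssubset_of_subset_of_ne hl hne), hr ▸ hL, hr ▸ disjoint_empty_right _⟩

lemma isMinNonFace_deletedJoin_empty_disjSum (hK : ∅ ∈ K) {t : Finset V} :
    IsMinNonFace (deletedJoin K L) ((∅ : Finset V).disjSum t) ↔ IsMinNonFace L t := by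
  simp only [IsMinNonFace, disjSum_mem_deletedJoin, disjoint_empty_left, and_true, true_and, hK]
  refine ⟨fun ⟨ht, hmin⟩ => ⟨ht, fun s hst => ?_⟩, fun ⟨ht, hmin⟩ => ⟨ht, fun ρ hρ => ?_⟩⟩
  · exact (disjSum_mem_deletedJoin.1 <|
      hmin _ (disjSum_ssubset_disjSum_of_subset_of_ssubset subset_rfl hst)).2.1
  · obtain ⟨hl, hr⟩ := subset_disjSum.1 hρ.1
    rw [subset_empty] at hl
    have hne : ρ.toRight ≠ t := fun h => hρ.2 (by rw [← toLeft_disjSum_toRight (u := ρ), h, hl])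
    exact ⟨hl ▸ hK, hmin _ (ssubset_of_subset_of_ne hr hne), hl ▸ disjoint_empty_left _⟩

lemma isMinNonFace_deletedJoin_singleton_disjSum_singleton (hK : IsSimplicialComplex K)
    (hL : IsSimplicialComplex L) {v : V} (hvK : {v} ∈ K) (hvL : {v} ∈ L) :
    IsMinNonFace (deletedJoin K L) (({v} : Finset V).disjSum {v}) := by
  refine ⟨fun h => by simpa using (disjSum_mem_deletedJoin.1 h).2.2, fun ρ hρ => ?_⟩
  obtain ⟨hl, hr⟩ := subset_disjSum.1 hρ.1
  refine ⟨hK.2 _ hvK _ hl, hL.2 _ hvL _ hr, ?_⟩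
  rcases subset_singleton_iff.1 hl with hl | hl
  · simp [hl]
  rcases subset_singleton_iff.1 hr with hr | hr
  · simp [hr]
  exact absurd (by rw [← toLeft_disjSum_toRight (u := ρ), hl, hr]) hρ.2

theorem isMinNonFace_deletedJoin_iff (hK : IsSimplicialComplex K) (hL : IsSimplicialComplex L)
    {ρ : Finset (V ⊕ V)} :
    IsMinNonFace (deletedJoin K L) ρ ↔
      (∃ s, IsMinNonFace K s ∧ ρ = s.disjSum ∅) ∨
      (∃ t, IsMinNonFace L t ∧ ρ = (∅ : Finset V).disjSum t) ∨
      (∃ v, {v} ∈ K ∧ {v} ∈ L ∧ ρ = ({v} : Finset V).disjSum {v}) := by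
  refine ⟨fun h => ?_, ?_⟩
  · by_cases hσ : ρ.toLeft ∈ K
    · by_cases hτ : ρ.toRight ∈ L
      · obtain ⟨v, hvσ, hvτ⟩ := not_disjoint_iff.1 fun hd => h.1 ⟨hσ, hτ, hd⟩
        have hρ : ({v} : Finset V).disjSum {v} = ρ := h.eq_of_subset_of_notMem
          (disjSum_subset.2 ⟨singleton_subset_iff.2 hvσ, singleton_subset_iff.2 hvτ⟩)
          (fun hv => by simpa using (disjSum_mem_deletedJoin.1 hv).2.2)
        subst hρ
        have hv : (∅ : Finset V) ⊂ {v} := empty_ssubset.2 (singleton_nonempty v)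
        refine Or.inr (Or.inr ⟨v, ?_, ?_, rfl⟩)
        · exact (disjSum_mem_deletedJoin.1 <|
            h.2 _ (disjSum_ssubset_disjSum_of_subset_of_ssubset subset_rfl hv)).1
        · exact (disjSum_mem_deletedJoin.1 <|
            h.2 _ (disjSum_ssubset_disjSum_of_ssubset_of_subset hv subset_rfl)).2.1
      · have hρ : (∅ : Finset V).disjSum ρ.toRight = ρ := h.eq_of_subset_of_notMem
          (disjSum_subset.2 ⟨empty_subset _, subset_rfl⟩)
          (fun hm => hτ (disjSum_mem_deletedJoin.1 hm).2.1)
        exact Or.inr (Or.inl ⟨_, (isMinNonFace_deletedJoin_empty_disjSum hK.1).1 (by rwa [hρ]),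
          hρ.symm⟩)
    · have hρ : ρ.toLeft.disjSum ∅ = ρ := h.eq_of_subset_of_notMem
        (disjSum_subset.2 ⟨subset_rfl, empty_subset _⟩)
        (fun hm => hσ (disjSum_mem_deletedJoin.1 hm).1)
      exact Or.inl ⟨_, (isMinNonFace_deletedJoin_disjSum_empty hL.1).1 (by rwa [hρ]), hρ.symm⟩
  · rintro (⟨s, hs, rfl⟩ | ⟨t, ht, rfl⟩ | ⟨v, hvK, hvL, rfl⟩)
    · exact (isMinNonFace_deletedJoin_disjSum_empty hL.1).2 hs
    · exact (isMinNonFace_deletedJoin_empty_disjSum hK.1).2 ht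
    · exact isMinNonFace_deletedJoin_singleton_disjSum_singleton hK hL hvK hvL

end DeletedJoin

lemma image_inl_union_image_inr [DecidableEq V] (s t : Finset V) :
    s.image Sum.inl ∪ t.image Sum.inr = s.disjSum t := by
  ext (x | x) <;> simp

lemma bier_eq_deletedJoin [Fintype V] [DecidableEq V] (K : Set (Finset V)) :
    bier K = deletedJoin K (alexDual K) := by
  ext ρ
  simp only [bier, image_inl_union_image_inr, Set.mem_ofPred_eq]
  constructor
  · rintro ⟨σ, τ, hσ, hτ, hd, rfl⟩
    exact disjSum_mem_deletedJoin.2 ⟨hσ, hτ, hd⟩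
  · rintro ⟨hσ, hτ, hd⟩
    exact ⟨_, _, hσ, hτ, hd, toLeft_disjSum_toRight.symm⟩

end

/-- description of the minimal non-faces of the Bier sphere. -/
theorem minNonFaces_bier {V : Type*} [Fintype V] [DecidableEq V] (K : Set (Finset V))
    (hK : IsSimplicialComplex K) (hne : K ≠ Set.univ) :
    ∀ ρ : Finset (V ⊕ V), IsMinNonFace (bier K) ρ ↔
      ((∃ s : Finset V, IsMinNonFace K s ∧ ρ = s.image Sum.inl) ∨
       (∃ t : Finset V, IsMinNonFace (alexDual K) t ∧ ρ = t.image Sum.inr) ∨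
       (∃ v : V, ({v} : Finset V) ∈ K ∧ ({v} : Finset V) ∈ alexDual K ∧
          ρ = {Sum.inl v, Sum.inr v})) := by
  intro ρ
  rw [bier_eq_deletedJoin, isMinNonFace_deletedJoin_iff hK (hK.alexDual (hK.univ_notMem hne))]
  simp only [← image_inl_union_image_inr, image_empty, union_empty, empty_union, image_singleton,
    insert_eq]
end

section
/- Let m ≥ 2 and let K be a simplicial complex on [m] = {1, …, m} with K ≠ 2^{[m]}. Then there exists a ℤ-linear map Λ : ℤ^{[m] ⊔ [m]'} → ℤ^{m−1} (from the free ℤ-module on the 2m-element set [m] ⊔ [m]') such that for every face ρ of the Bier sphere Bier(K), the family of vectors (Λ(e_w))_{w ∈ ρ} can be extended to a ℤ-basis of ℤ^{m−1}. (This is the combinatorial content of the statement that the Buchstaber number of Bier(K) attains its maximal possible value 2m − (m − 1) = m + 1.) -/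
/-! Send both `i` and `i'` to `v i`, where `v 0, …, v (m-2)` is the standard basis of `ℤ^{m-1}`
and `v (m-1) = -(v 0 + ⋯ + v (m-2))`. Since the `v i` sum to zero, any `m - 1` of them span
`ℤ^{m-1}`, and a spanning family of `rank`-many vectors over a commutative ring is a basis.
A face `σ ⊔ τ'` of `Bier(K)` has `σ ∩ τ = ∅`, and `σ ∪ τ ≠ [m]` because otherwise `[m] \ τ ⊆ σ`
would be a face of `K`; so its vertices go injectively to the `v i` with `i ≠ j` for some `j`. -/

open Submodule

section SimplexVectors

variable (R : Type*) [Ring R] (n : ℕ)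

def simplexVec : Fin (n + 1) → Fin n → R :=
  Fin.snoc (α := fun _ => Fin n → R) (fun k => Pi.single k 1) (-1)

theorem sum_simplexVec : ∑ i, simplexVec R n i = 0 := by
  simp only [simplexVec, Fin.sum_univ_castSucc, Fin.snoc_castSucc, Fin.snoc_last,
    Finset.univ_sum_single]
  exact add_neg_cancel 1

theorem span_range_simplexVec : span R (Set.range (simplexVec R n)) = ⊤ := by
  refine eq_top_iff.2 ((Pi.basisFun R (Fin n)).span_eq.ge.trans (span_mono ?_))
  rintro _ ⟨k, rfl⟩
  exact ⟨k.castSucc, by simp [simplexVec]⟩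

end SimplexVectors

theorem span_range_comp_succAbove {R M : Type*} [Ring R] [AddCommGroup M] [Module R M] {n : ℕ}
    {v : Fin (n + 1) → M} (hv : ∑ i, v i = 0) (j : Fin (n + 1)) :
    span R (Set.range (v ∘ j.succAbove)) = span R (Set.range v) := by
  refine le_antisymm (span_mono (Set.range_comp_subset_range _ _)) (span_le.2 ?_)
  rintro _ ⟨i, rfl⟩
  rcases j.eq_self_or_eq_succAbove i with rfl | ⟨k, rfl⟩
  · have hvi : v i = -∑ k, v (i.succAbove k) := by
      rw [Fin.sum_univ_succAbove _ i] at hv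
      exact eq_neg_of_add_eq_zero_left hv
    rw [hvi]
    exact neg_mem (sum_mem fun k _ => subset_span ⟨k, rfl⟩)
  · exact subset_span ⟨k, rfl⟩

noncomputable def simplexBasis (R : Type*) [CommRing R] [Nontrivial R] (n : ℕ)
    (j : Fin (n + 1)) : Module.Basis (Fin n) R (Fin n → R) :=
  basisOfTopLeSpanOfCardEqFinrank (simplexVec R n ∘ j.succAbove)
    (by rw [span_range_comp_succAbove (sum_simplexVec R n), span_range_simplexVec])
    (by simp)

theorem simplexBasis_apply (R : Type*) [CommRing R] [Nontrivial R] (n : ℕ) (j : Fin (n + 1))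
    (k : Fin n) : simplexBasis R n j k = simplexVec R n (j.succAbove k) := by
  simp [simplexBasis]

section Bier

variable {V : Type*} [Fintype V] [DecidableEq V] {K : Set (Finset V)} {ρ : Finset (V ⊕ V)}

theorem injOn_elim_of_mem_bier (hρ : ρ ∈ bier K) :
    Set.InjOn (Sum.elim id id) (ρ : Set (V ⊕ V)) := by
  obtain ⟨σ, τ, -, -, hd, rfl⟩ := hρ
  rintro (a | a) ha (b | b) hb (h : a = b) <;> subst h <;> simp_all [Finset.disjoint_left]

theorem exists_notMem_union_of_mem_alexDual (hK : IsSimplicialComplex K) {σ τ : Finset V}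
    (hσ : σ ∈ K) (hτ : τ ∈ alexDual K) : ∃ j, j ∉ σ ∪ τ := by
  by_contra! h
  refine hτ (hK.2 σ hσ _ fun x hx => ?_)
  simpa [(Finset.mem_sdiff.1 hx).2] using h x

theorem exists_forall_elim_ne_of_mem_bier (hK : IsSimplicialComplex K) (hρ : ρ ∈ bier K) :
    ∃ j, ∀ w ∈ ρ, Sum.elim id id w ≠ j := by
  obtain ⟨σ, τ, hσ, hτ, -, rfl⟩ := hρ
  obtain ⟨j, hj⟩ := exists_notMem_union_of_mem_alexDual hK hσ hτ
  refine ⟨j, ?_⟩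
  rintro (a | a) ha rfl <;> simp_all

end Bier

theorem bier_buchstaber_maximal_general (m : ℕ) (K : Set (Finset (Fin m)))
    (hK : IsSimplicialComplex K) :
    ∃ Λ : ((Fin m ⊕ Fin m) → ℤ) →ₗ[ℤ] (Fin (m - 1) → ℤ),
      ∀ ρ ∈ bier K,
        ∃ b : Module.Basis (Fin (m - 1)) ℤ (Fin (m - 1) → ℤ),
          ∃ g : {w // w ∈ ρ} → Fin (m - 1), Function.Injective g ∧
            ∀ w : {w // w ∈ ρ},
              b (g w) = Λ (Pi.single ((w : Fin m ⊕ Fin m)) (1 : ℤ)) := by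
  cases m with
  | zero =>
    refine ⟨0, fun ρ hρ => ?_⟩
    obtain ⟨j, -⟩ := exists_forall_elim_ne_of_mem_bier hK hρ
    exact j.elim0
  | succ n =>
    refine ⟨Fintype.linearCombination ℤ (simplexVec ℤ n ∘ Sum.elim id id), fun ρ hρ => ?_⟩
    obtain ⟨j, hj⟩ := exists_forall_elim_ne_of_mem_bier hK hρ
    choose g hg using fun w : ρ => Fin.exists_succAbove_eq (hj w w.2)
    refine ⟨simplexBasis ℤ n j, g, fun w₁ w₂ h => ?_, fun w => ?_⟩
    · refine Subtype.ext (injOn_elim_of_mem_bier hρ w₁.2 w₂.2 ?_)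
      rw [← hg w₁, ← hg w₂, h]
    · simp [simplexBasis_apply, hg]

/-- there is a `ℤ`-linear map `Λ : ℤ^{[m] ⊔ [m]'} → ℤ^{m−1}` such that for
every face `ρ` of the Bier sphere of `K`, the family `(Λ(e_w))_{w ∈ ρ}` extends to a
`ℤ`-basis of `ℤ^{m−1}` (the Buchstaber number of `Bier(K)` is maximal, `m + 1`). -/
theorem bier_buchstaber_maximal (m : ℕ) (hm : 2 ≤ m) (K : Set (Finset (Fin m)))
    (hK : IsSimplicialComplex K) (hne : K ≠ Set.univ) :
    ∃ Λ : ((Fin m ⊕ Fin m) → ℤ) →ₗ[ℤ] (Fin (m - 1) → ℤ),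
      ∀ ρ ∈ bier K,
        ∃ b : Module.Basis (Fin (m - 1)) ℤ (Fin (m - 1) → ℤ),
          ∃ g : {w // w ∈ ρ} → Fin (m - 1), Function.Injective g ∧
            ∀ w : {w // w ∈ ρ},
              b (g w) = Λ (Pi.single ((w : Fin m ⊕ Fin m)) (1 : ℤ)) :=
  bier_buchstaber_maximal_general m K hK
end

section
/- Let V be a finite set and K a simplicial complex on V with K ≠ 2^V. Then the Bier sphere Bier(K) is a flag complex (every minimal non-face has at most 2 elements) if and only if both K and its Alexander dual K̂ are flag complexes. -/
/-- A flag simplicial complex: every minimal non-face has at most two elements. -/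
def IsFlag {V : Type*} (K : Set (Finset V)) : Prop :=
  ∀ s : Finset V, IsMinNonFace K s → s.card ≤ 2

open Finset Function

section MinNonFace

variable {α β : Type*} {K : Set (Finset α)} {L : Set (Finset β)}

lemma IsMinNonFace.eq_of_subset {s t : Finset α} (hs : IsMinNonFace K s) (hts : t ⊆ s)
    (ht : t ∉ K) : t = s :=
  by_contra fun hne => ht (hs.2 t (ssubset_of_subset_of_ne hts hne))

lemma isMinNonFace_map_iff (f : α ↪ β) (hKL : ∀ s, s.map f ∈ L ↔ s ∈ K) (s : Finset α) :
    IsMinNonFace L (s.map f) ↔ IsMinNonFace K s := by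
  refine and_congr (hKL s).not ⟨fun h t hts => ?_, fun h t hts => ?_⟩
  · exact (hKL t).1 (h _ (map_ssubset_map.2 hts))
  · obtain ⟨u, -, rfl⟩ := subset_map_iff.1 hts.subset
    exact (hKL u).2 (h u (map_ssubset_map.1 hts))

lemma IsFlag.comap (f : α ↪ β) (hKL : ∀ s, s.map f ∈ L ↔ s ∈ K) (hL : IsFlag L) :
    IsFlag K := fun s hs =>
  card_map f ▸ hL _ ((isMinNonFace_map_iff f hKL s).2 hs)

lemma IsMinNonFace.card_le_two_of_map_subset (f : α ↪ β) (hKL : ∀ s, s.map f ∈ L ↔ s ∈ K)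
    (hK : IsFlag K) {ρ : Finset β} (hρ : IsMinNonFace L ρ) {s : Finset α} (hsρ : s.map f ⊆ ρ)
    (hs : s ∉ K) : ρ.card ≤ 2 := by
  obtain rfl := hρ.eq_of_subset hsρ ((hKL s).not.2 hs)
  rw [card_map]
  exact hK s ((isMinNonFace_map_iff f hKL s).1 hρ)

end MinNonFace

section Bier

variable {V : Type*} [Fintype V] [DecidableEq V] {K : Set (Finset V)}

lemma empty_mem_alexDual (hK : IsSimplicialComplex K) (hne : K ≠ Set.univ) :
    (∅ : Finset V) ∈ alexDual K := by
  show univ \ ∅ ∉ K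
  rw [sdiff_empty]
  exact fun h => hne (Set.eq_univ_of_forall fun s => hK.2 _ h s (subset_univ s))

lemma mem_bier_iff {ρ : Finset (V ⊕ V)} :
    ρ ∈ bier K ↔ ρ.toLeft ∈ K ∧ ρ.toRight ∈ alexDual K ∧ Disjoint ρ.toLeft ρ.toRight := by
  have disjSum_eq (σ τ : Finset V) : σ.image Sum.inl ∪ τ.image Sum.inr = σ.disjSum τ := by
    ext x; cases x <;> simp
  constructor
  · rintro ⟨σ, τ, hσ, hτ, hστ, rfl⟩
    simpa [disjSum_eq] using ⟨hσ, hτ, hστ⟩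
  · rintro ⟨hσ, hτ, hστ⟩
    exact ⟨ρ.toLeft, ρ.toRight, hσ, hτ, hστ, by rw [disjSum_eq, toLeft_disjSum_toRight]⟩

lemma map_inl_mem_bier_iff (hK₀ : (∅ : Finset V) ∈ alexDual K) (s : Finset V) :
    s.map Embedding.inl ∈ bier K ↔ s ∈ K := by
  simp [mem_bier_iff, ← disjSum_empty, hK₀]

lemma map_inr_mem_bier_iff (hK₀ : (∅ : Finset V) ∈ K) (s : Finset V) :
    s.map Embedding.inr ∈ bier K ↔ s ∈ alexDual K := by
  simp [mem_bier_iff, ← empty_disjSum, hK₀]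

lemma pair_notMem_bier (v : V) : ({Sum.inl v, Sum.inr v} : Finset (V ⊕ V)) ∉ bier K := by
  simp [mem_bier_iff]

lemma isFlag_bier (hK₀ : (∅ : Finset V) ∈ K) (hD₀ : (∅ : Finset V) ∈ alexDual K)
    (hK : IsFlag K) (hD : IsFlag (alexDual K)) : IsFlag (bier K) := by
  intro ρ hρ
  by_cases hσ : ρ.toLeft ∈ K; swap
  · exact hρ.card_le_two_of_map_subset _ (map_inl_mem_bier_iff hD₀) hK
      (map_inl_subset_iff_subset_toLeft.2 subset_rfl) hσ
  by_cases hτ : ρ.toRight ∈ alexDual K; swap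
  · exact hρ.card_le_two_of_map_subset _ (map_inr_mem_bier_iff hK₀) hD
      (map_inr_subset_iff_subset_toRight.2 subset_rfl) hτ
  obtain ⟨v, hvσ, hvτ⟩ := not_disjoint_iff.1 fun hστ => hρ.1 (mem_bier_iff.2 ⟨hσ, hτ, hστ⟩)
  have hvρ : {Sum.inl v, Sum.inr v} ⊆ ρ :=
    insert_subset_iff.2 ⟨mem_toLeft.1 hvσ, singleton_subset_iff.2 (mem_toRight.1 hvτ)⟩
  rw [← hρ.eq_of_subset hvρ (pair_notMem_bier v)]
  exact card_le_two

end Bier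

/-- the Bier sphere is flag iff both `K` and its Alexander dual are flag. -/
theorem bier_flag_iff {V : Type*} [Fintype V] [DecidableEq V]
    (K : Set (Finset V)) (hK : IsSimplicialComplex K) (hne : K ≠ Set.univ) :
    IsFlag (bier K) ↔ IsFlag K ∧ IsFlag (alexDual K) := by
  have hD₀ := empty_mem_alexDual hK hne
  refine ⟨fun hB => ⟨?_, ?_⟩, fun ⟨hKf, hDf⟩ => isFlag_bier hK.1 hD₀ hKf hDf⟩
  · exact hB.comap Embedding.inl (map_inl_mem_bier_iff hD₀)
  · exact hB.comap Embedding.inr (map_inr_mem_bier_iff hK.1)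
end
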